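/- Let ε > 0 and let f be a function from the closed unit ball B of S₂^d to S₂^d satisfying |⟨f(x),f(y)⟩ − ⟨x,y⟩| ≤ ε for all x, y ∈ B. Define F : S₂^d → S₂^d by F(0) := 0 and F(x) := ‖x‖₂·( f(x/(2‖x‖₂)) − f(−x/(2‖x‖₂)) ) for x ≠ 0. Then for all x ∈ B: |⟨F(x),f(x)⟩ − ‖x‖₂²| ≤ 2ε·‖x‖₂. -/
import Mathlib


open Finset Matrix

/-- The real vector space of `d × d` complex Hermitian matrices. -/
noncomputable abbrev HermMat (d : ℕ) := selfAdjoint (Matrix (Fin d) (Fin d) ℂ)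

/-- The Hilbert–Schmidt inner product `⟨x, y⟩ = Tr (x y)` on Hermitian matrices. -/
noncomputable def hsInner {d : ℕ} (x y : HermMat d) : ℝ :=
  (((x : Matrix (Fin d) (Fin d) ℂ) * (y : Matrix (Fin d) (Fin d) ℂ)).trace).re

/-- The Hilbert–Schmidt norm `‖x‖₂ = (Tr x²)^{1/2}` on Hermitian matrices. -/
noncomputable def hsNorm {d : ℕ} (x : HermMat d) : ℝ :=
  Real.sqrt (hsInner x x)

/-- The set of rank-one orthogonal projections in `ℂ^{d×d}`, viewed inside the
Hermitian matrices. -/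
def rankOneProjSet (d : ℕ) : Set (HermMat d) :=
  { p | ∃ v : EuclideanSpace ℂ (Fin d), ‖v‖ = 1 ∧
    (p : Matrix (Fin d) (Fin d) ℂ) = Matrix.of fun i j => v i * star (v j) }

lemma hsInner_smul {d : ℕ} (a : ℝ) (x y : HermMat d) :
    hsInner (a • x) y = a * hsInner x y := by
  simp [hsInner, Matrix.smul_mul, Complex.smul_re]

lemma hsInner_sub {d : ℕ} (x y z : HermMat d) :
    hsInner (x - y) z = hsInner x z - hsInner y z := by
  simp [hsInner, Matrix.sub_mul, sub_mul]

lemma hsInner_neg {d : ℕ} (x y : HermMat d) :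
    hsInner (-x) y = - hsInner x y := by
  simp [hsInner, Matrix.neg_mul]

lemma hsInner_zero {d : ℕ} (y : HermMat d) : hsInner 0 y = 0 := by
  simp [hsInner]

lemma hsInner_self {d : ℕ} (x : HermMat d) :
    hsInner x x = ∑ i, ∑ j, Complex.normSq ((x : Matrix (Fin d) (Fin d) ℂ) i j) := by
  have hx : ∀ i j, (x : Matrix (Fin d) (Fin d) ℂ) j i =
      star ((x : Matrix (Fin d) (Fin d) ℂ) i j) := by
    intro i j
    have := x.2
    rw [selfAdjoint.mem_iff] at this
    conv_lhs => rw [← this]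
    rfl
  simp only [hsInner, Matrix.trace, Matrix.diag, Matrix.mul_apply, Complex.re_sum]
  congr 1; ext i; congr 1; ext j
  rw [hx i j]
  simp [Complex.normSq_apply, Complex.mul_re]

lemma hsInner_self_nonneg {d : ℕ} (x : HermMat d) : 0 ≤ hsInner x x := by
  rw [hsInner_self]
  exact Finset.sum_nonneg fun i _ => Finset.sum_nonneg fun j _ => Complex.normSq_nonneg _

lemma hsNorm_pos {d : ℕ} (x : HermMat d) (hx : x ≠ 0) : 0 < hsNorm x := by
  rw [hsNorm, Real.sqrt_pos]
  rcases lt_or_eq_of_le (hsInner_self_nonneg x) with h | h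
  · exact h
  exfalso; apply hx
  rw [hsInner_self] at h
  have : ∀ i ∈ (univ : Finset (Fin d)), ∑ j, Complex.normSq ((x : Matrix (Fin d) (Fin d) ℂ) i j) = 0 := by
    intro i _
    have := (Finset.sum_eq_zero_iff_of_nonneg (fun i _ => Finset.sum_nonneg fun j _ => Complex.normSq_nonneg _)).mp h.symm
    exact this i (mem_univ i)
  ext i j
  have h2 := (Finset.sum_eq_zero_iff_of_nonneg (fun j _ => Complex.normSq_nonneg _)).mp (this i (mem_univ i)) j (mem_univ j)
  have : (x : Matrix (Fin d) (Fin d) ℂ) i j = 0 := by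
    exact Complex.normSq_eq_zero.mp h2
  simpa using this

lemma hsNorm_sq {d : ℕ} (x : HermMat d) : hsNorm x ^ 2 = hsInner x x := by
  rw [hsNorm, Real.sq_sqrt (hsInner_self_nonneg x)]

lemma hsNorm_smul {d : ℕ} (a : ℝ) (x : HermMat d) (ha : 0 ≤ a) :
    hsNorm (a • x) = a * hsNorm x := by
  rw [hsNorm, hsNorm, hsInner_smul]
  have : hsInner x (a • x) = a * hsInner x x := by
    simp [hsInner, Matrix.mul_smul, Complex.smul_re]
  rw [this, ← mul_assoc, Real.sqrt_mul (mul_nonneg ha ha), Real.sqrt_mul_self ha]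

lemma hsNorm_neg {d : ℕ} (x : HermMat d) : hsNorm (-x) = hsNorm x := by
  simp [hsNorm, hsInner, Matrix.neg_mul, Matrix.mul_neg]


theorem stmt13 (d : ℕ) (ε : ℝ) (hε : 0 < ε)
    (f : HermMat d → HermMat d)
    (hsym : ∀ x ∈ { x : HermMat d | hsNorm x ≤ 1 }, ∀ y ∈ { x : HermMat d | hsNorm x ≤ 1 },
      |hsInner (f x) (f y) - hsInner x y| ≤ ε)
    (F : HermMat d → HermMat d)
    (hF0 : F 0 = 0)
    (hFdef : ∀ x : HermMat d, x ≠ 0 →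
      F x = hsNorm x • (f ((2 * hsNorm x)⁻¹ • x) - f (-((2 * hsNorm x)⁻¹ • x)))) :
    ∀ x ∈ { x : HermMat d | hsNorm x ≤ 1 },
      |hsInner (F x) (f x) - hsNorm x ^ 2| ≤ 2 * ε * hsNorm x := by
  intro x hx
  by_cases hx0 : x = 0
  · subst hx0
    rw [hF0, hsInner_zero]
    simp [hsNorm, hsInner_zero]
  · set r := hsNorm x with hr
    have hrpos : 0 < r := hsNorm_pos x hx0
    set u : HermMat d := (2 * r)⁻¹ • x with hu
    have hur : hsNorm u = 1 / 2 := by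
      rw [hu, hsNorm_smul _ _ (by positivity), ← hr]
      field_simp
    have humem : u ∈ { x : HermMat d | hsNorm x ≤ 1 } := by
      simp [Set.mem_setOf_eq, hur]; norm_num
    have hnumem : -u ∈ { x : HermMat d | hsNorm x ≤ 1 } := by
      simp only [Set.mem_setOf_eq, hsNorm_neg, hur]; norm_num
    have hux : hsInner u x = r / 2 := by
      rw [hu, hsInner_smul, ← hsNorm_sq, ← hr]
      field_simp
    have hnux : hsInner (-u) x = -(r / 2) := by rw [hsInner_neg, hux]
    have h1 := hsym u humem x hx
    have h2 := hsym (-u) hnumem x hx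
    rw [hux] at h1
    rw [hnux] at h2
    rw [hFdef x hx0, ← hr, ← hu, hsInner_smul, hsInner_sub, hsNorm_sq, ← hsNorm_sq, ← hr]
    have key : r * (hsInner (f u) (f x) - hsInner (f (-u)) (f x)) - r ^ 2 =
        r * ((hsInner (f u) (f x) - r / 2) - (hsInner (f (-u)) (f x) - -(r / 2))) := by
      ring
    rw [key, abs_mul, abs_of_pos hrpos]
    calc r * |_| ≤ r * (|hsInner (f u) (f x) - r / 2| + |hsInner (f (-u)) (f x) - -(r / 2)|) := by
            exact mul_le_mul_of_nonneg_left (abs_sub _ _) hrpos.le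
      _ ≤ r * (ε + ε) := by
            exact mul_le_mul_of_nonneg_left (add_le_add h1 h2) hrpos.le
      _ = 2 * ε * r := by ring
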